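/- arXiv:2001.04347 — 3 statements merged into one kernel-verified Lean document; each statement's English description precedes it below -/
import Mathlib

section
/- (Decisiveness criterion.) Let T = (S, Σ, κ) be a stochastic transition system, let B ∈ Σ, and let A ∈ Σ be an attractor for T. Let A' = A ∩ (S ∖ B̃) be the set of states of A from which B is reachable with positive probability. If there exists p > 0 such that for every ν ∈ Dist(A'), Prob_ν(F B) ≥ p, then T is decisive with respect to B. -/
open MeasureTheory ProbabilityTheory Filter Set ENNReal

namespace STS

variable {S : Type*} [MeasurableSpace S]

/-- The finite-dimensional distributions of the Markov chain with initial distribution `μ`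
and transition kernel `κ`: `finDist κ μ n` is the joint law of the first `n+1` states. -/
noncomputable def finDist (κ : Kernel S S) (μ : Measure S) : (n : ℕ) → Measure (Fin (n + 1) → S)
  | 0 => μ.map (fun s => fun _ => s)
  | n + 1 => (finDist κ μ n).bind (fun x => (κ (x (Fin.last n))).map (Fin.snoc x))

/-- `P` assigns to each initial probability distribution `μ` the probability measure `Prob_μ`
on the space of runs `ℕ → S` (given by the Ionescu–Tulcea theorem), i.e. the unique probability
measure under which the coordinate process is a Markov chain with initial distribution `μ` and
transition kernel `κ`.  This is characterized by the finite-dimensional distributions. -/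
def IsMarkovMeasureFamily (κ : Kernel S S) (P : Measure S → Measure (ℕ → S)) : Prop :=
  ∀ μ : Measure S, IsProbabilityMeasure μ →
    IsProbabilityMeasure (P μ) ∧
    ∀ n : ℕ, (P μ).map (fun ω (i : Fin (n + 1)) => ω i.1) = finDist κ μ n

/-- `F B`: the set of runs that visit `B` at some point. -/
def FEv (B : Set S) : Set (ℕ → S) := {ω | ∃ k, ω k ∈ B}

/-- `F^{≤n} B`: the set of runs that visit `B` within `n` steps. -/
def FLe (n : ℕ) (B : Set S) : Set (ℕ → S) := {ω | ∃ k ≤ n, ω k ∈ B}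

/-- `B' U B`: runs that stay in `B'` until a first visit to `B`. -/
def Until (B' B : Set S) : Set (ℕ → S) := {ω | ∃ k, ω k ∈ B ∧ ∀ j < k, ω j ∈ B'}

/-- `B' U^{≤n} B`: runs that stay in `B'` until a first visit to `B`, within `n` steps. -/
def UntilLe (n : ℕ) (B' B : Set S) : Set (ℕ → S) :=
  {ω | ∃ k ≤ n, ω k ∈ B ∧ ∀ j < k, ω j ∈ B'}

/-- `G B`: runs that always stay in `B`. -/
def Glob (B : Set S) : Set (ℕ → S) := {ω | ∀ k, ω k ∈ B}

/-- `GF B`: runs that visit `B` infinitely often. -/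
def GlobFEv (B : Set S) : Set (ℕ → S) := {ω | ∀ n : ℕ, ∃ k ≥ n, ω k ∈ B}

/-- The avoid-set `B̃` of `B`: states from which `B` is reached with probability `0`. -/
def avoidSet (P : Measure S → Measure (ℕ → S)) (B : Set S) : Set S :=
  {s : S | P (Measure.dirac s) (FEv B) = 0}

/-- The STS is decisive w.r.t. `B`: from any initial distribution, almost surely either `B` or
its avoid-set `B̃` is eventually visited. -/
def Decisive (P : Measure S → Measure (ℕ → S)) (B : Set S) : Prop :=
  ∀ μ : Measure S, IsProbabilityMeasure μ → P μ (FEv B ∪ FEv (avoidSet P B)) = 1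

/-- `A` is an attractor: it is reached almost surely from any initial distribution. -/
def IsAttractor (P : Measure S → Measure (ℕ → S)) (A : Set S) : Prop :=
  ∀ μ : Measure S, IsProbabilityMeasure μ → P μ (FEv A) = 1

/-!
Let `A' = A ∩ B̃ᶜ` and let `D` be the event of never visiting `B` while visiting `A'` infinitely
often; `D` is invariant under shifting the run. Put `M = sup_{t ∈ A'} Prob_t(D)`. Decomposing at
the first entrance into `A'` and applying the Markov property there gives `Prob_ν(D) ≤ M` for
every `ν`. Conditioning instead on the first `n` states and letting `n → ∞` gives
`Prob_t(D) ≤ M · Prob_t(G ¬B) ≤ M (1 - p)` for `t ∈ A'`, hence `M ≤ M (1 - p)` and `M = 0`.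
Since `A` is an attractor, by the Markov property it is visited infinitely often almost surely;
a run visiting neither `B` nor `B̃` but visiting `A` infinitely often visits `A'` infinitely
often, so it lies in `D`.

The Markov property at fixed times is derived from the description of `Prob_μ` by its
finite-dimensional laws, through a π-λ argument on cylinder sets.
-/

open Function Topology

lemma measurable_snoc_uncurry (n : ℕ) :
    Measurable fun p : (Fin (n + 1) → S) × S => (Fin.snoc p.1 p.2 : Fin (n + 2) → S) := by
  refine measurable_pi_lambda _ fun i => ?_
  induction i using Fin.lastCases with
  | last => simpa using measurable_snd
  | cast j => simpa using measurable_fst.eval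

lemma measurable_snoc {n : ℕ} (x : Fin (n + 1) → S) :
    Measurable (Fin.snoc (α := fun _ => S) x) :=
  (measurable_snoc_uncurry n).comp measurable_prodMk_left

lemma measurable_const_fin_one : Measurable fun s : S => fun _ : Fin 1 => s :=
  measurable_pi_lambda _ fun _ => measurable_id

section FinDist

variable (κ : Kernel S S)

lemma lintegral_finDist_zero (μ : Measure S) {g : (Fin 1 → S) → ℝ≥0∞} (hg : Measurable g) :
    ∫⁻ x, g x ∂finDist κ μ 0 = ∫⁻ s, g (fun _ => s) ∂μ :=
  lintegral_map hg measurable_const_fin_one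

variable [IsSFiniteKernel κ]

lemma measurable_lintegral_snoc {n : ℕ} {g : (Fin (n + 2) → S) → ℝ≥0∞} (hg : Measurable g) :
    Measurable fun x : Fin (n + 1) → S => ∫⁻ z, g (Fin.snoc x z) ∂κ (x (Fin.last n)) :=
  Measurable.lintegral_kernel_prod_right (f := fun x z => g (Fin.snoc x z))
    (κ := κ.comap (fun x : Fin (n + 1) → S => x (Fin.last n)) (measurable_pi_apply _))
    (hg.comp (measurable_snoc_uncurry n))

lemma measurable_map_snoc (n : ℕ) :
    Measurable fun x : Fin (n + 1) → S =>
      (κ (x (Fin.last n))).map (Fin.snoc (α := fun _ => S) x) := by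
  refine Measure.measurable_of_measurable_coe _ fun t ht => ?_
  simp_rw [Measure.map_apply (measurable_snoc _) ht]
  exact Kernel.measurable_kernel_prodMk_left
    (κ := κ.comap (fun x => x (Fin.last n)) (measurable_pi_apply _)) (measurable_snoc_uncurry n ht)

lemma lintegral_finDist_succ (μ : Measure S) (n : ℕ) {g : (Fin (n + 2) → S) → ℝ≥0∞}
    (hg : Measurable g) :
    ∫⁻ x, g x ∂finDist κ μ (n + 1)
      = ∫⁻ x, ∫⁻ z, g (Fin.snoc x z) ∂κ (x (Fin.last n)) ∂finDist κ μ n := by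
  rw [finDist, Measure.lintegral_bind (measurable_map_snoc κ n).aemeasurable hg.aemeasurable]
  exact lintegral_congr fun x => lintegral_map hg (measurable_snoc x)

lemma measurable_lintegral_finDist_dirac (n : ℕ) {g : (Fin (n + 1) → S) → ℝ≥0∞}
    (hg : Measurable g) : Measurable fun s => ∫⁻ x, g x ∂finDist κ (.dirac s) n := by
  induction n with
  | zero =>
    have hg' : Measurable fun s : S => g fun _ => s := hg.comp measurable_const_fin_one
    simpa only [lintegral_finDist_zero κ _ hg, lintegral_dirac' _ hg'] using hg'
  | succ n ih =>
    simp_rw [lintegral_finDist_succ κ _ n hg]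
    exact ih (measurable_lintegral_snoc κ hg)

lemma measurable_finDist_dirac_apply (n : ℕ) {R : Set (Fin (n + 1) → S)} (hR : MeasurableSet R) :
    Measurable fun s => finDist κ (.dirac s) n R := by
  simp_rw [← lintegral_indicator_one hR]
  exact measurable_lintegral_finDist_dirac κ n (measurable_one.indicator hR)

end FinDist

section Splitting

def finPrefix {α : Type*} (n m : ℕ) (x : Fin (n + m + 1) → α) : Fin (n + 1) → α :=
  fun i => x ⟨i, by omega⟩

/-- Overlaps `finPrefix n m x` in the state at index `n`. -/
def finSuffix {α : Type*} (n m : ℕ) (x : Fin (n + m + 1) → α) : Fin (m + 1) → α :=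
  fun j => x ⟨n + j, by omega⟩

lemma measurable_finPrefix (n m : ℕ) : Measurable (finPrefix (α := S) n m) :=
  measurable_pi_lambda _ fun _ => measurable_pi_apply _

lemma measurable_finSuffix (n m : ℕ) : Measurable (finSuffix (α := S) n m) :=
  measurable_pi_lambda _ fun _ => measurable_pi_apply _

lemma finSuffix_zero {α : Type*} (n : ℕ) (x : Fin (n + 0 + 1) → α) :
    finSuffix n 0 x = fun _ => x (Fin.last n) := by
  funext j
  exact congrArg x (Fin.ext (by simp))

lemma finPrefix_snoc {α : Type*} (n m : ℕ) (x : Fin (n + m + 1) → α) (z : α) :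
    finPrefix n (m + 1) (Fin.snoc x z) = finPrefix n m x := by
  funext i
  simp [finPrefix, Fin.snoc, show (i : ℕ) < n + (m + 1) by omega]

lemma finSuffix_snoc {α : Type*} (n m : ℕ) (x : Fin (n + m + 1) → α) (z : α) :
    finSuffix n (m + 1) (Fin.snoc x z) = Fin.snoc (finSuffix n m x) z := by
  funext j
  simp [finSuffix, Fin.snoc]

variable (κ : Kernel S S) [IsSFiniteKernel κ]

theorem lintegral_finDist_add (μ : Measure S) (n m : ℕ) {f : (Fin (n + 1) → S) → ℝ≥0∞}
    {g : (Fin (m + 1) → S) → ℝ≥0∞} (hf : Measurable f) (hg : Measurable g) :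
    ∫⁻ x, f (finPrefix n m x) * g (finSuffix n m x) ∂finDist κ μ (n + m)
      = ∫⁻ y, f y * ∫⁻ z, g z ∂finDist κ (.dirac (y (Fin.last n))) m ∂finDist κ μ n := by
  induction m with
  | zero =>
    have hg' : Measurable fun s : S => g fun _ => s := hg.comp measurable_const_fin_one
    simp only [finSuffix_zero]
    refine lintegral_congr fun y => congrArg (f y * ·) ?_
    exact ((lintegral_finDist_zero κ _ hg).trans (lintegral_dirac' _ hg')).symm
  | succ m ih =>
    have hfg : Measurable fun x => f (finPrefix n (m + 1) x) * g (finSuffix n (m + 1) x) :=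
      (hf.comp (measurable_finPrefix _ _)).mul (hg.comp (measurable_finSuffix _ _))
    calc _ = ∫⁻ x, f (finPrefix n m x) * ∫⁻ z, g (Fin.snoc (finSuffix n m x) z)
            ∂κ (finSuffix n m x (Fin.last m)) ∂finDist κ μ (n + m) := by
          refine (lintegral_finDist_succ κ μ (n + m) hfg).trans (lintegral_congr fun x => ?_)
          simp only [finPrefix_snoc, finSuffix_snoc]
          exact lintegral_const_mul _ (hg.comp (measurable_snoc _))
      _ = _ := by
          rw [ih (measurable_lintegral_snoc κ hg)]
          simp_rw [lintegral_finDist_succ κ _ m hg]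

lemma finDist_add_apply (μ : Measure S) (n m : ℕ) {C : Set (Fin (n + 1) → S)}
    {R : Set (Fin (m + 1) → S)} (hC : MeasurableSet C) (hR : MeasurableSet R) :
    finDist κ μ (n + m) (finPrefix n m ⁻¹' C ∩ finSuffix n m ⁻¹' R)
      = ∫⁻ y in C, finDist κ (.dirac (y (Fin.last n))) m R ∂finDist κ μ n := by
  have h := lintegral_finDist_add κ μ n m (measurable_one.indicator hC)
    (measurable_one.indicator hR)
  simp only [lintegral_indicator_one hR] at h
  rw [← lintegral_indicator_one ((measurable_finPrefix n m hC).inter (measurable_finSuffix n m hR)),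
    ← lintegral_indicator hC]
  convert h using 3 with x y
  · rw [Set.inter_indicator_one]
    rfl
  · by_cases hy : y ∈ C <;> simp [hy]

end Splitting

def trunc {α : Type*} (n : ℕ) (ω : ℕ → α) : Fin (n + 1) → α := fun i => ω i

def shift {α : Type*} (n : ℕ) (ω : ℕ → α) : ℕ → α := fun k => ω (n + k)

lemma measurable_trunc (n : ℕ) : Measurable (trunc (α := S) n) :=
  measurable_pi_lambda _ fun _ => measurable_pi_apply _

lemma measurable_shift (n : ℕ) : Measurable (shift (α := S) n) :=
  measurable_pi_lambda _ fun _ => measurable_pi_apply _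

lemma trunc_preimage_inter_shift_preimage {α : Type*} (n m : ℕ) (C : Set (Fin (n + 1) → α))
    (R : Set (Fin (m + 1) → α)) :
    trunc n ⁻¹' C ∩ shift n ⁻¹' (trunc m ⁻¹' R)
      = trunc (n + m) ⁻¹' (finPrefix n m ⁻¹' C ∩ finSuffix n m ⁻¹' R) :=
  rfl

def cylinders : Set (Set (ℕ → S)) :=
  {E | ∃ n, ∃ R : Set (Fin (n + 1) → S), MeasurableSet R ∧ E = trunc n ⁻¹' R}

lemma isPiSystem_cylinders : IsPiSystem (cylinders (S := S)) := by
  rintro _ ⟨a, R₁, hR₁, rfl⟩ _ ⟨b, R₂, hR₂, rfl⟩ -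
  let restr (c : ℕ) (h : c ≤ max a b) (x : Fin (max a b + 1) → S) : Fin (c + 1) → S :=
    fun i => x ⟨i, by omega⟩
  have hrestr (c : ℕ) (h : c ≤ max a b) : Measurable (restr c h) :=
    measurable_pi_lambda _ fun _ => measurable_pi_apply _
  exact ⟨max a b, restr a (le_max_left a b) ⁻¹' R₁ ∩ restr b (le_max_right a b) ⁻¹' R₂,
    (hrestr a (le_max_left a b) hR₁).inter (hrestr b (le_max_right a b) hR₂), rfl⟩

lemma generateFrom_cylinders :
    (inferInstance : MeasurableSpace (ℕ → S)) = .generateFrom cylinders := by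
  refine le_antisymm (iSup_le fun k => ?_) (MeasurableSpace.generateFrom_le ?_)
  · rintro _ ⟨s, hs, rfl⟩
    exact MeasurableSpace.measurableSet_generateFrom
      ⟨k, (fun x => x (Fin.last k)) ⁻¹' s, measurable_pi_apply _ hs, rfl⟩
  · rintro _ ⟨n, R, hR, rfl⟩
    exact measurable_trunc n hR

lemma measurableSet_FEv {U : Set S} (hU : MeasurableSet U) : MeasurableSet (FEv U) := by
  simp only [FEv, Set.ofPred_exists]
  exact .iUnion fun k => measurable_pi_apply k hU

lemma measurableSet_Glob {U : Set S} (hU : MeasurableSet U) : MeasurableSet (Glob U) := by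
  simp only [Glob, Set.ofPred_forall]
  exact .iInter fun k => measurable_pi_apply k hU

lemma measurableSet_GlobFEv {U : Set S} (hU : MeasurableSet U) : MeasurableSet (GlobFEv U) := by
  simp only [GlobFEv, Set.ofPred_forall, Set.ofPred_exists]
  exact .iInter fun n => .iUnion fun k =>
    (MeasurableSet.const (k ≥ n)).inter (measurable_pi_apply k hU)

lemma Glob_compl {α : Type*} (U : Set α) : Glob Uᶜ = (FEv U)ᶜ := by
  ext ω
  simp [Glob, FEv]

lemma shift_mem_Glob_inter_GlobFEv {α : Type*} {U V : Set α} {ω : ℕ → α}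
    (hω : ω ∈ Glob U ∩ GlobFEv V) (n : ℕ) : shift n ω ∈ Glob U ∩ GlobFEv V := by
  refine ⟨fun k => hω.1 (n + k), fun m => ?_⟩
  obtain ⟨k, hk, hkV⟩ := hω.2 (n + m)
  exact ⟨k - n, by omega, by simpa [shift, Nat.add_sub_cancel' (show n ≤ k by omega)]⟩

lemma _root_.ENNReal.eq_zero_of_le_mul_one_sub {a p : ℝ≥0∞} (ha : a ≠ ∞) (hp : 0 < p)
    (h : a ≤ a * (1 - p)) : a = 0 := by
  by_contra ha₀
  have hlt : a * (1 - p) < a * 1 :=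
    (ENNReal.mul_lt_mul_iff_right ha₀ ha).2 (ENNReal.sub_lt_self one_ne_top one_ne_zero hp.ne')
  exact (h.trans_lt (by simpa using hlt)).false

namespace IsMarkovMeasureFamily

variable {κ : Kernel S S} {P : Measure S → Measure (ℕ → S)} (hP : IsMarkovMeasureFamily κ P)
include hP

lemma isProbabilityMeasure_apply (μ : Measure S) [IsProbabilityMeasure μ] :
    IsProbabilityMeasure (P μ) :=
  (hP μ inferInstance).1

lemma map_trunc (μ : Measure S) [IsProbabilityMeasure μ] (n : ℕ) :
    (P μ).map (trunc n) = finDist κ μ n :=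
  (hP μ inferInstance).2 n

lemma apply_trunc_preimage (μ : Measure S) [IsProbabilityMeasure μ] {n : ℕ}
    {R : Set (Fin (n + 1) → S)} (hR : MeasurableSet R) :
    P μ (trunc n ⁻¹' R) = finDist κ μ n R := by
  rw [← hP.map_trunc μ n, Measure.map_apply (measurable_trunc n) hR]

variable [IsSFiniteKernel κ]

lemma measurable_dirac_apply {E : Set (ℕ → S)} (hE : MeasurableSet E) :
    Measurable fun s => P (.dirac s) E := by
  have := fun s => hP.isProbabilityMeasure_apply (.dirac s)
  induction E, hE using MeasurableSpace.induction_on_inter generateFrom_cylinders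
    isPiSystem_cylinders with
  | empty => simp
  | basic _ hE =>
    obtain ⟨n, R, hR, rfl⟩ := hE
    simp_rw [hP.apply_trunc_preimage _ hR]
    exact measurable_finDist_dirac_apply κ n hR
  | compl E hE ih =>
    simp_rw [prob_compl_eq_one_sub hE]
    exact measurable_const.sub ih
  | iUnion E hdisj hE ih =>
    simp_rw [measure_iUnion hdisj hE]
    exact .tsum ih

lemma measurable_dirac_eval (n : ℕ) : Measurable fun ω : ℕ → S => P (.dirac (ω n)) :=
  Measure.measurable_of_measurable_coe _ fun _ hE =>
    (hP.measurable_dirac_apply hE).comp (measurable_pi_apply n)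

/-- The Markov property at time `n`. -/
theorem map_shift_restrict_trunc (μ : Measure S) [IsProbabilityMeasure μ] (n : ℕ)
    {C : Set (Fin (n + 1) → S)} (hC : MeasurableSet C) :
    ((P μ).restrict (trunc n ⁻¹' C)).map (shift n)
      = ((P μ).restrict (trunc n ⁻¹' C)).bind fun ω => P (.dirac (ω n)) := by
  have := hP.isProbabilityMeasure_apply μ
  have := fun s => hP.isProbabilityMeasure_apply (.dirac s)
  have hbind {E : Set (ℕ → S)} (hE : MeasurableSet E) :
      (((P μ).restrict (trunc n ⁻¹' C)).bind fun ω => P (.dirac (ω n))) E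
        = ∫⁻ ω in trunc n ⁻¹' C, P (.dirac (ω n)) E ∂P μ :=
    Measure.bind_apply hE (hP.measurable_dirac_eval n).aemeasurable
  refine ext_of_generate_finite _ generateFrom_cylinders isPiSystem_cylinders ?_ ?_
  · rintro _ ⟨m, R, hR, rfl⟩
    have hf : Measurable fun y : Fin (n + 1) → S => finDist κ (.dirac (y (Fin.last n))) m R :=
      (measurable_finDist_dirac_apply κ m hR).comp (measurable_pi_apply _)
    rw [Measure.map_apply (measurable_shift n) (measurable_trunc m hR),
      Measure.restrict_apply' (measurable_trunc n hC), Set.inter_comm,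
      trunc_preimage_inter_shift_preimage, hP.apply_trunc_preimage μ
        ((measurable_finPrefix n m hC).inter (measurable_finSuffix n m hR)),
      finDist_add_apply κ μ n m hC hR, hbind (measurable_trunc m hR),
      ← hP.map_trunc μ n, setLIntegral_map hC hf (measurable_trunc n)]
    exact setLIntegral_congr_fun (measurable_trunc n hC) fun ω _ =>
      (hP.apply_trunc_preimage _ hR).symm
  · simp [Measure.map_apply (measurable_shift n) .univ, hbind .univ]

lemma apply_trunc_inter_shift_le (μ : Measure S) [IsProbabilityMeasure μ] (n : ℕ)
    {C : Set (Fin (n + 1) → S)} (hC : MeasurableSet C) {E : Set (ℕ → S)} (hE : MeasurableSet E)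
    {M : ℝ≥0∞} (hM : ∀ ω ∈ trunc n ⁻¹' C, P (.dirac (ω n)) E ≤ M) :
    P μ (trunc n ⁻¹' C ∩ shift n ⁻¹' E) ≤ M * P μ (trunc n ⁻¹' C) := by
  calc P μ (trunc n ⁻¹' C ∩ shift n ⁻¹' E)
      = ∫⁻ ω in trunc n ⁻¹' C, P (.dirac (ω n)) E ∂P μ := by
        rw [Set.inter_comm, ← Measure.restrict_apply (measurable_shift n hE),
          ← Measure.map_apply (measurable_shift n) hE, hP.map_shift_restrict_trunc μ n hC,
          Measure.bind_apply hE (hP.measurable_dirac_eval n).aemeasurable]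
    _ ≤ ∫⁻ _ in trunc n ⁻¹' C, M ∂P μ := setLIntegral_mono measurable_const hM
    _ = M * P μ (trunc n ⁻¹' C) := setLIntegral_const _ _

lemma measurableSet_avoidSet {B : Set S} (hB : MeasurableSet B) :
    MeasurableSet (avoidSet P B) :=
  hP.measurable_dirac_apply (measurableSet_FEv hB) (measurableSet_singleton 0)

/-- Decompose according to the time of the first entrance into `V`. -/
lemma apply_le_iSup_dirac (μ : Measure S) [IsProbabilityMeasure μ] {V : Set S}
    (hV : MeasurableSet V) {E : Set (ℕ → S)} (hE : MeasurableSet E) (hEV : E ⊆ FEv V)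
    (hshift : ∀ ω ∈ E, ∀ n, shift n ω ∈ E) :
    P μ E ≤ ⨆ t ∈ V, P (.dirac t) E := by
  have := hP.isProbabilityMeasure_apply μ
  set M := ⨆ t ∈ V, P (.dirac t) E
  let firstEntry (k : ℕ) : Set (Fin (k + 1) → S) :=
    (fun x => x (Fin.last k)) ⁻¹' V ∩ ⋂ i : Fin k, (fun x => x i.castSucc) ⁻¹' Vᶜ
  have hmeas (k : ℕ) : MeasurableSet (firstEntry k) :=
    (measurable_pi_apply _ hV).inter (.iInter fun _ => measurable_pi_apply _ hV.compl)
  have hdisj : Pairwise (Disjoint on fun k => trunc k ⁻¹' firstEntry k) :=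
    (pairwise_disjoint_on _).2 fun k l hkl => Set.disjoint_left.2 fun ω hk hl =>
      Set.mem_iInter.1 hl.2 ⟨k, hkl⟩ hk.1
  have hcover : E ⊆ ⋃ k, trunc k ⁻¹' firstEntry k ∩ shift k ⁻¹' E := by
    classical
    intro ω hω
    have hV' : ∃ k, ω k ∈ V := hEV hω
    exact Set.mem_iUnion.2 ⟨Nat.find hV', ⟨Nat.find_spec hV',
      Set.mem_iInter.2 fun i => Nat.find_min hV' i.isLt⟩, hshift ω hω _⟩
  calc P μ E ≤ ∑' k, P μ (trunc k ⁻¹' firstEntry k ∩ shift k ⁻¹' E) :=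
        (measure_mono hcover).trans (measure_iUnion_le _)
    _ ≤ ∑' k, M * P μ (trunc k ⁻¹' firstEntry k) :=
        ENNReal.tsum_le_tsum fun k => hP.apply_trunc_inter_shift_le μ k (hmeas k) hE
          fun ω hω => le_iSup₂ (f := fun t _ => P (.dirac t) E) (ω k) hω.1
    _ = M * P μ (⋃ k, trunc k ⁻¹' firstEntry k) := by
        rw [ENNReal.tsum_mul_left, measure_iUnion hdisj fun k => measurable_trunc k (hmeas k)]
    _ ≤ M := mul_le_of_le_one_right' prob_le_one

lemma apply_le_mul_apply_Glob (μ : Measure S) [IsProbabilityMeasure μ] {B : Set S}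
    (hB : MeasurableSet B) {E : Set (ℕ → S)} (hE : MeasurableSet E) (hEB : E ⊆ Glob Bᶜ)
    (hshift : ∀ ω ∈ E, ∀ n, shift n ω ∈ E) {M : ℝ≥0∞} (hM : ∀ s, P (.dirac s) E ≤ M)
    (hM_ne_top : M ≠ ∞) :
    P μ E ≤ M * P μ (Glob Bᶜ) := by
  have := hP.isProbabilityMeasure_apply μ
  let avoidUpTo (n : ℕ) : Set (Fin (n + 1) → S) := ⋂ i, (fun x => x i) ⁻¹' Bᶜ
  have hmeas (n : ℕ) : MeasurableSet (avoidUpTo n) :=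
    .iInter fun _ => measurable_pi_apply _ hB.compl
  have hlim : Tendsto (fun n => P μ (trunc n ⁻¹' avoidUpTo n)) atTop (𝓝 (P μ (Glob Bᶜ))) := by
    have hinter : ⋂ n, trunc n ⁻¹' avoidUpTo n = Glob Bᶜ := by
      ext ω
      simp only [avoidUpTo, trunc, Glob, Set.mem_iInter, Set.mem_preimage]
      exact ⟨fun h k => h k (Fin.last k), fun h n i => h i⟩
    rw [← hinter]
    refine tendsto_measure_iInter_atTop (fun n => (measurable_trunc n (hmeas n)).nullMeasurableSet)
      (fun a b hab ω hω => Set.mem_iInter.2 fun i => Set.mem_iInter.1 hω ⟨i, by omega⟩)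
      ⟨0, measure_ne_top _ _⟩
  refine ge_of_tendsto (ENNReal.Tendsto.const_mul hlim (.inr hM_ne_top))
    (.of_forall fun n => ?_)
  calc P μ E ≤ P μ (trunc n ⁻¹' avoidUpTo n ∩ shift n ⁻¹' E) :=
        measure_mono fun ω hω => ⟨Set.mem_iInter.2 fun i => hEB hω i, hshift ω hω n⟩
    _ ≤ M * P μ (trunc n ⁻¹' avoidUpTo n) :=
        hP.apply_trunc_inter_shift_le μ n (hmeas n) hE fun ω _ => hM _

lemma apply_shift_preimage_eq_zero (μ : Measure S) [IsProbabilityMeasure μ]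
    {E : Set (ℕ → S)} (hE : MeasurableSet E) (h₀ : ∀ s, P (.dirac s) E = 0) (n : ℕ) :
    P μ (shift n ⁻¹' E) = 0 := by
  simpa using hP.apply_trunc_inter_shift_le μ n .univ hE (M := 0) fun ω _ => (h₀ _).le

lemma apply_compl_GlobFEv_eq_zero (μ : Measure S) [IsProbabilityMeasure μ] {A : Set S}
    (hA : MeasurableSet A) (hattr : IsAttractor P A) : P μ (GlobFEv A)ᶜ = 0 := by
  have hsub : (GlobFEv A)ᶜ ⊆ ⋃ n, shift n ⁻¹' Glob Aᶜ := by
    intro ω hω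
    simp only [GlobFEv, Set.mem_compl_iff, Set.mem_ofPred_eq, not_forall, not_exists,
      not_and] at hω
    obtain ⟨n, hn⟩ := hω
    exact Set.mem_iUnion.2 ⟨n, fun k => hn (n + k) (Nat.le_add_right n k)⟩
  refine measure_mono_null hsub (measure_iUnion_null fun n =>
    hP.apply_shift_preimage_eq_zero μ (measurableSet_Glob hA.compl) (fun s => ?_) n)
  have := hP.isProbabilityMeasure_apply (.dirac s)
  rw [Glob_compl, prob_compl_eq_zero_iff (measurableSet_FEv hA)]
  exact hattr _ inferInstance

theorem apply_Glob_compl_inter_GlobFEv_eq_zero (μ : Measure S) [IsProbabilityMeasure μ]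
    {B V : Set S} (hB : MeasurableSet B) (hV : MeasurableSet V) {p : ℝ≥0∞} (hp : 0 < p)
    (hreach : ∀ t ∈ V, p ≤ P (.dirac t) (FEv B)) :
    P μ (Glob Bᶜ ∩ GlobFEv V) = 0 := by
  set E := Glob Bᶜ ∩ GlobFEv V
  have hE : MeasurableSet E := (measurableSet_Glob hB.compl).inter (measurableSet_GlobFEv hV)
  have hEV : E ⊆ FEv V := fun ω hω => (hω.2 0).imp fun _ hk => hk.2
  have hshift : ∀ ω ∈ E, ∀ n, shift n ω ∈ E := fun _ hω => shift_mem_Glob_inter_GlobFEv hω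
  set M := ⨆ t ∈ V, P (.dirac t) E
  have hle (ν : Measure S) [IsProbabilityMeasure ν] : P ν E ≤ M :=
    hP.apply_le_iSup_dirac ν hV hE hEV hshift
  have hM_ne_top : M ≠ ∞ := ne_top_of_le_ne_top one_ne_top <| iSup₂_le fun t _ => by
    have := hP.isProbabilityMeasure_apply (.dirac t)
    exact prob_le_one
  have hM : M ≤ M * (1 - p) := iSup₂_le fun t ht => by
    have := hP.isProbabilityMeasure_apply (.dirac t)
    calc P (.dirac t) E ≤ M * P (.dirac t) (Glob Bᶜ) :=
          hP.apply_le_mul_apply_Glob _ hB hE Set.inter_subset_left hshift (fun _ => hle _)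
            hM_ne_top
      _ ≤ M * (1 - p) := by
          rw [Glob_compl, prob_compl_eq_one_sub (measurableSet_FEv hB)]
          gcongr
          exact hreach t ht
  exact le_antisymm ((hle μ).trans (ENNReal.eq_zero_of_le_mul_one_sub hM_ne_top hp hM).le)
    zero_le

end IsMarkovMeasureFamily

/-- decisiveness criterion. If `A` is an attractor and there is `p > 0` such
that from every distribution concentrated on `A' = A ∩ B̃ᶜ` the probability of reaching `B` is
at least `p`, then the STS is decisive w.r.t. `B`. -/
theorem decisiveness_criterion
    (κ : Kernel S S) [IsMarkovKernel κ]
    (P : Measure S → Measure (ℕ → S)) (hP : IsMarkovMeasureFamily κ P)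
    (B A : Set S) (hB : MeasurableSet B) (hA : MeasurableSet A)
    (hattr : IsAttractor P A)
    (p : ℝ≥0∞) (hp : 0 < p)
    (hreach : ∀ ν : Measure S, IsProbabilityMeasure ν →
      ν (A ∩ (avoidSet P B)ᶜ) = 1 → p ≤ P ν (FEv B)) :
    Decisive P B := by
  intro μ hμ
  have := hP.isProbabilityMeasure_apply μ
  set A' := A ∩ (avoidSet P B)ᶜ
  have havoid : MeasurableSet (avoidSet P B) := hP.measurableSet_avoidSet hB
  have hA' : MeasurableSet A' := hA.inter havoid.compl
  have hnull : P μ (Glob Bᶜ ∩ GlobFEv A') = 0 :=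
    hP.apply_Glob_compl_inter_GlobFEv_eq_zero μ hB hA' hp fun t ht =>
      hreach _ inferInstance (Measure.dirac_apply_of_mem ht)
  have hsub : (FEv B ∪ FEv (avoidSet P B))ᶜ ⊆ (Glob Bᶜ ∩ GlobFEv A') ∪ (GlobFEv A)ᶜ := by
    intro ω hω
    simp only [Set.compl_union, Set.mem_inter_iff, ← Glob_compl] at hω
    by_cases hA_inf : ω ∈ GlobFEv A
    · refine .inl ⟨hω.1, fun n => ?_⟩
      obtain ⟨k, hk, hkA⟩ := hA_inf n
      exact ⟨k, hk, hkA, hω.2 k⟩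
    · exact .inr hA_inf
  rw [← prob_compl_eq_zero_iff ((measurableSet_FEv hB).union (measurableSet_FEv havoid))]
  exact measure_mono_null hsub
    (measure_union_null hnull (hP.apply_compl_GlobFEv_eq_zero μ hA hattr))

end STS
end

section
/- Consider the random-walk STS T on S = ℕ (with the discrete σ-algebra) whose Markov kernel satisfies κ(0, ·) = δ_1 and, for n ≥ 1, κ(n, ·) = p·δ_{n+1} + (1−p)·δ_{n−1}, where 0 < p ≤ 1/2. Then for every initial probability distribution μ on ℕ, Prob_μ(F {0}) = 1; in particular, T is decisive with respect to B = {0}. -/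
/-!
Let `h n s` be the probability of hitting `0` within `n` steps from `s`. Conditioning on the
first step gives `h (n+1) (m+1) = p * h n (m+2) + (1-p) * h n m`, so `V = ⨆ n, h n` is a solution
of `V (m+1) = p * V (m+2) + (1-p) * V m` with values in `[0, 1]` and `V 0 = 1`. Its increments
`d m = V m - V (m+1)` satisfy `p * d (m+1) = (1-p) * d m`; as `1 - p ≥ p`, a nonzero increment is
followed by increments of the same sign that are at least as large, which a bounded `V` cannot
afford. Hence `V ≡ 1`, and `Prob_μ (F {0}) ≥ ∫ h n ∂μ → 1`.
-/

open MeasureTheory ProbabilityTheory Filter Set ENNReal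

namespace STS

variable {S : Type*} [MeasurableSpace S]

theorem _root_.MeasureTheory.Measure.bind_map' {α β γ : Type*} [MeasurableSpace α]
    [MeasurableSpace β] [MeasurableSpace γ] {μ : Measure α} {g : α → β} {f : β → Measure γ}
    (hg : Measurable g) (hf : Measurable f) :
    (μ.map g).bind f = μ.bind (f ∘ g) := by
  rw [Measure.bind, Measure.bind, Measure.map_map hf hg]

theorem _root_.MeasureTheory.Measure.map_bind' {α β γ : Type*} [MeasurableSpace α]
    [MeasurableSpace β] [MeasurableSpace γ] {μ : Measure α} {f : α → Measure β} {g : β → γ}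
    (hf : Measurable f) (hg : Measurable g) :
    (μ.bind f).map g = μ.bind (fun a => (f a).map g) := by
  rw [Measure.bind, Measure.bind, ← Measure.join_map_map hg,
    Measure.map_map (Measure.measurable_map g hg) hf]
  rfl

open scoped Classical in
noncomputable def hitProb (κ : Kernel S S) (B : Set S) : ℕ → S → ℝ≥0∞
  | 0 => fun s => if s ∈ B then 1 else 0
  | n + 1 => fun s => if s ∈ B then 1 else ∫⁻ t, hitProb κ B n t ∂κ s

theorem hitProb_of_mem (κ : Kernel S S) {B : Set S} {s : S} (hs : s ∈ B) (n : ℕ) :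
    hitProb κ B n s = 1 := by
  cases n <;> simp [hitProb, hs]

theorem hitProb_succ_of_notMem (κ : Kernel S S) {B : Set S} {s : S} (hs : s ∉ B) (n : ℕ) :
    hitProb κ B (n + 1) s = ∫⁻ t, hitProb κ B n t ∂κ s := by
  simp [hitProb, hs]

theorem hitProb_le_one (κ : Kernel S S) [IsMarkovKernel κ] (B : Set S) (n : ℕ) (s : S) :
    hitProb κ B n s ≤ 1 := by
  induction n generalizing s with
  | zero => by_cases hs : s ∈ B <;> simp [hitProb, hs]
  | succ n ih =>
    by_cases hs : s ∈ B
    · exact (hitProb_of_mem κ hs _).le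
    · rw [hitProb_succ_of_notMem κ hs]
      exact (lintegral_mono ih).trans_eq (by simp)

theorem hitProb_le_succ (κ : Kernel S S) (B : Set S) (n : ℕ) (s : S) :
    hitProb κ B n s ≤ hitProb κ B (n + 1) s := by
  induction n generalizing s with
  | zero => by_cases hs : s ∈ B <;> simp [hitProb, hs]
  | succ n ih =>
    by_cases hs : s ∈ B
    · rw [hitProb_of_mem κ hs, hitProb_of_mem κ hs]
    · rw [hitProb_succ_of_notMem κ hs, hitProb_succ_of_notMem κ hs]
      exact lintegral_mono ih

theorem monotone_hitProb (κ : Kernel S S) (B : Set S) : Monotone (hitProb κ B) :=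
  monotone_nat_of_le_succ fun n s => hitProb_le_succ κ B n s

section Discrete

variable [Countable S] [MeasurableSingletonClass S]

theorem isProbabilityMeasure_finDist (κ : Kernel S S) [IsMarkovKernel κ] (μ : Measure S)
    [IsProbabilityMeasure μ] (n : ℕ) : IsProbabilityMeasure (finDist κ μ n) := by
  induction n with
  | zero => exact Measure.isProbabilityMeasure_map Measurable.of_discrete.aemeasurable
  | succ n ih =>
    constructor
    rw [finDist, Measure.bind_apply MeasurableSet.univ Measurable.of_discrete.aemeasurable]
    simp [Measure.map_apply Measurable.of_discrete MeasurableSet.univ]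

theorem finDist_succ_eq_bind_cons (κ : Kernel S S) (n : ℕ) (μ : Measure S) :
    finDist κ μ (n + 1) = μ.bind (fun s => (finDist κ (κ s) n).map (Fin.cons s)) := by
  induction n generalizing μ with
  | zero =>
    rw [finDist, finDist, Measure.bind_map' .of_discrete .of_discrete]
    congr 1
    funext s
    rw [finDist, Function.comp_apply, Measure.map_map .of_discrete .of_discrete]
    congr 1
    funext t i
    fin_cases i <;> rfl
  | succ n ih =>
    rw [finDist, ih, Measure.bind_bind Measurable.of_discrete.aemeasurable
      Measurable.of_discrete.aemeasurable]
    congr 1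
    funext s
    rw [Measure.bind_map' .of_discrete .of_discrete, finDist,
      Measure.map_bind' .of_discrete .of_discrete]
    congr 1
    funext y
    rw [Function.comp_apply, Measure.map_map .of_discrete .of_discrete, ← Fin.succ_last,
      Fin.cons_succ]
    congr 1
    funext t
    exact (Fin.cons_snoc_eq_snoc_cons s y t).symm

theorem finDist_hit_eq_lintegral_hitProb (κ : Kernel S S) [IsMarkovKernel κ] (B : Set S)
    (n : ℕ) (μ : Measure S) :
    finDist κ μ n {x | ∃ i, x i ∈ B} = ∫⁻ s, hitProb κ B n s ∂μ := by
  induction n generalizing μ with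
  | zero =>
    have hpre : (fun s (_ : Fin 1) => s) ⁻¹' {x | ∃ i, x i ∈ B} = B := by ext; simp
    rw [finDist, Measure.map_apply .of_discrete .of_discrete, hpre,
      ← lintegral_indicator_one .of_discrete]
    rfl
  | succ n ih =>
    rw [finDist_succ_eq_bind_cons, Measure.bind_apply .of_discrete
      Measurable.of_discrete.aemeasurable]
    congr 1
    funext s
    rw [Measure.map_apply .of_discrete .of_discrete]
    by_cases hs : s ∈ B
    · have := isProbabilityMeasure_finDist κ (κ s) n
      have hpre : Fin.cons s ⁻¹' {x : Fin (n + 2) → S | ∃ i, x i ∈ B} = univ := by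
        ext y; simp [Fin.exists_fin_succ, hs]
      rw [hpre, measure_univ, hitProb_of_mem κ hs]
    · have hpre : Fin.cons s ⁻¹' {x : Fin (n + 2) → S | ∃ i, x i ∈ B} = {y | ∃ i, y i ∈ B} := by
        ext y; simp [Fin.exists_fin_succ, hs]
      rw [hpre, ih, hitProb_succ_of_notMem κ hs]

theorem lintegral_hitProb_le (κ : Kernel S S) [IsMarkovKernel κ] {P : Measure S → Measure (ℕ → S)}
    (hP : IsMarkovMeasureFamily κ P) (μ : Measure S) [IsProbabilityMeasure μ] (B : Set S)
    (n : ℕ) : ∫⁻ s, hitProb κ B n s ∂μ ≤ P μ (FEv B) := by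
  rw [← finDist_hit_eq_lintegral_hitProb, ← (hP μ inferInstance).2 n,
    Measure.map_apply (measurable_pi_lambda _ fun i => measurable_pi_apply i.1) .of_discrete]
  exact measure_mono fun ω ⟨i, hi⟩ => ⟨i, hi⟩

theorem measure_fEv_eq_one (κ : Kernel S S) [IsMarkovKernel κ] {P : Measure S → Measure (ℕ → S)}
    (hP : IsMarkovMeasureFamily κ P) (μ : Measure S) [IsProbabilityMeasure μ] {B : Set S}
    (hB : ∀ s, ⨆ n, hitProb κ B n s = 1) : P μ (FEv B) = 1 := by
  have := (hP μ inferInstance).1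
  refine le_antisymm prob_le_one ?_
  calc (1 : ℝ≥0∞) = ∫⁻ s, ⨆ n, hitProb κ B n s ∂μ := by simp [hB]
    _ = ⨆ n, ∫⁻ s, hitProb κ B n s ∂μ :=
      lintegral_iSup (fun _ => .of_discrete) (monotone_hitProb κ B)
    _ ≤ P μ (FEv B) := iSup_le (lintegral_hitProb_le κ hP μ B)

end Discrete

theorem monotone_of_recurrence {p : ℝ} (hp0 : 0 ≤ p) (hp : p ≤ 1 / 2) {g : ℕ → ℝ}
    (hg : BddBelow (range g)) (hrec : ∀ m, g (m + 1) = p * g (m + 2) + (1 - p) * g m) :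
    Monotone g := by
  refine monotone_nat_of_le_succ fun m => ?_
  by_contra! hdrop
  set d := g m - g (m + 1) with hd
  have hd0 : 0 < d := by linarith
  have hp_pos : 0 < p := by
    rcases hp0.eq_or_lt with rfl | h
    · linarith [hrec m]
    · exact h
  have hdrops : ∀ k, d ≤ g (m + k) - g (m + k + 1) := by
    intro k
    induction k with
    | zero => simp [hd]
    | succ k ih =>
      have hstep := hrec (m + k)
      rw [← add_assoc]
      nlinarith
  have hlin : ∀ k : ℕ, g (m + k) ≤ g m - k * d := by
    intro k
    induction k with
    | zero => simp
    | succ k ih =>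
      rw [← add_assoc]
      push_cast
      linarith [hdrops k]
  obtain ⟨c, hc⟩ := hg
  obtain ⟨k, hk⟩ := exists_nat_gt ((g m - c) / d)
  rw [div_lt_iff₀ hd0] at hk
  linarith [hlin k, hc (mem_range_self (m + k))]

theorem eq_of_recurrence {p : ℝ} (hp0 : 0 ≤ p) (hp : p ≤ 1 / 2) {g : ℕ → ℝ}
    (hbelow : BddBelow (range g)) (habove : BddAbove (range g))
    (hrec : ∀ m, g (m + 1) = p * g (m + 2) + (1 - p) * g m) (m : ℕ) : g m = g 0 := by
  have hmono := monotone_of_recurrence hp0 hp hbelow hrec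
  have hanti : Monotone (-g) := by
    refine monotone_of_recurrence hp0 hp ?_ fun m => ?_
    · obtain ⟨b, hb⟩ := habove
      exact ⟨-b, by rintro _ ⟨k, rfl⟩; simpa using hb (mem_range_self k)⟩
    · simp only [Pi.neg_apply, hrec m]; ring
  exact le_antisymm (by simpa using hanti (Nat.zero_le m)) (hmono (Nat.zero_le m))

theorem _root_.ENNReal.eq_one_of_recurrence {p : ℝ≥0∞} (hp : p ≤ 1 / 2) {V : ℕ → ℝ≥0∞}
    (hV0 : V 0 = 1) (hV : ∀ m, V m ≤ 1)
    (hrec : ∀ m, V (m + 1) = p * V (m + 2) + (1 - p) * V m) (m : ℕ) : V m = 1 := by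
  have hp_top : p ≠ ⊤ := ne_top_of_le_ne_top (by norm_num) hp
  have hV_top : ∀ m, V m ≠ ⊤ := fun m => ne_top_of_le_ne_top one_ne_top (hV m)
  have hrec_real : ∀ m, (V (m + 1)).toReal
      = p.toReal * (V (m + 2)).toReal + (1 - p.toReal) * (V m).toReal := by
    intro m
    rw [hrec, ENNReal.toReal_add (mul_ne_top hp_top (hV_top _))
        (mul_ne_top (sub_ne_top one_ne_top) (hV_top _)), toReal_mul, toReal_mul,
      toReal_sub_of_le (hp.trans (by norm_num)) one_ne_top, toReal_one]
  have hp_real : p.toReal ≤ 1 / 2 := by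
    simpa using toReal_mono (by norm_num) hp
  have hconst := eq_of_recurrence (g := fun m => (V m).toReal) toReal_nonneg hp_real
    ⟨0, by rintro _ ⟨k, rfl⟩; exact toReal_nonneg⟩
    ⟨1, by rintro _ ⟨k, rfl⟩; exact toReal_le_of_le_ofReal zero_le_one (ofReal_one ▸ hV k)⟩
    hrec_real m
  rwa [hV0, toReal_one, toReal_eq_one_iff] at hconst

section RandomWalk

variable {κ : Kernel ℕ ℕ} {p : ℝ≥0∞}

theorem hitProb_zero_succ_succ
    (hκ : ∀ n : ℕ, κ (n + 1) = p • Measure.dirac (n + 2) + (1 - p) • Measure.dirac n)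
    (n m : ℕ) :
    hitProb κ {0} (n + 1) (m + 1) = p * hitProb κ {0} n (m + 2) + (1 - p) * hitProb κ {0} n m := by
  rw [hitProb_succ_of_notMem κ (by simp), hκ, lintegral_add_measure, lintegral_smul_measure,
    lintegral_smul_measure, lintegral_dirac, lintegral_dirac, smul_eq_mul, smul_eq_mul]

theorem iSup_hitProb_zero_eq_one [IsMarkovKernel κ] (hp : p ≤ 1 / 2)
    (hκ : ∀ n : ℕ, κ (n + 1) = p • Measure.dirac (n + 2) + (1 - p) • Measure.dirac n) (s : ℕ) :
    ⨆ n, hitProb κ {0} n s = 1 := by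
  have hmono (s : ℕ) : Monotone fun n => hitProb κ {0} n s := fun _ _ h => monotone_hitProb κ _ h s
  refine ENNReal.eq_one_of_recurrence hp (by simp [hitProb_of_mem])
    (fun s => iSup_le fun n => hitProb_le_one κ _ n s) (fun m => ?_) s
  rw [← (hmono (m + 1)).iSup_nat_add 1]
  simp only [hitProb_zero_succ_succ hκ]
  rw [mul_iSup, mul_iSup,
    iSup_add_iSup_of_monotone ((hmono _).const_mul' p) ((hmono _).const_mul' (1 - p))]

end RandomWalk

theorem randomWalk_le_half_reaches_zero_general
    (κ : Kernel ℕ ℕ) [IsMarkovKernel κ]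
    (p : ℝ≥0∞) (hp : p ≤ 1 / 2)
    (hκ : ∀ n : ℕ, κ (n + 1) = p • Measure.dirac (n + 2) + (1 - p) • Measure.dirac n)
    (P : Measure ℕ → Measure (ℕ → ℕ)) (hP : IsMarkovMeasureFamily κ P) :
    (∀ μ : Measure ℕ, IsProbabilityMeasure μ → P μ (FEv {0}) = 1) ∧
      Decisive P ({0} : Set ℕ) := by
  have hreach (μ : Measure ℕ) (_ : IsProbabilityMeasure μ) : P μ (FEv {0}) = 1 :=
    measure_fEv_eq_one κ hP μ (iSup_hitProb_zero_eq_one hp hκ)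
  refine ⟨hreach, fun μ hμ => ?_⟩
  have := (hP μ hμ).1
  exact le_antisymm prob_le_one (hreach μ hμ ▸ measure_mono subset_union_left)

/-- For the random walk on `ℕ` with parameter `p ≤ 1/2`, state `0` is reached
almost surely from any initial distribution; in particular the STS is decisive w.r.t. `{0}`. -/
theorem randomWalk_le_half_reaches_zero
    (κ : Kernel ℕ ℕ) [IsMarkovKernel κ]
    (p : ℝ≥0∞) (hp0 : 0 < p) (hp : p ≤ 1 / 2)
    (hκ0 : κ 0 = Measure.dirac 1)
    (hκ : ∀ n : ℕ, κ (n + 1) = p • Measure.dirac (n + 2) + (1 - p) • Measure.dirac n)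
    (P : Measure ℕ → Measure (ℕ → ℕ)) (hP : IsMarkovMeasureFamily κ P) :
    (∀ μ : Measure ℕ, IsProbabilityMeasure μ → P μ (FEv {0}) = 1) ∧
      Decisive P ({0} : Set ℕ) :=
  randomWalk_le_half_reaches_zero_general κ p hp hκ P hP

end STS
end

section
/- Let T1 = (S1, Σ1, κ1) and T2 = (S2, Σ2, κ2) be stochastic transition systems and α : S1 → S2 a measurable map such that T2 is an α-abstraction of T1. Then positive probability of reachability is preserved: for every B ∈ Σ2 and every initial probability distribution μ on (S1, Σ1), if Prob^{T1}_μ(F α⁻¹(B)) > 0 then Prob^{T2}_{α_#(μ)}(F B) > 0. -/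
open MeasureTheory ProbabilityTheory Filter Set ENNReal

namespace STS

variable {S : Type*} [MeasurableSpace S]

/-- Two measures on the same space are qualitatively equivalent if they have the same
measurable sets of positive measure. -/
def QualEquiv {T : Type*} [MeasurableSpace T] (μ ν : Measure T) : Prop :=
  ∀ C : Set T, MeasurableSet C → (0 < μ C ↔ 0 < ν C)

/-- The one-step transformation of a distribution through an STS with kernel `κ`:
`Ω_T(μ)(A) = ∫ κ(s, A) dμ(s)`. -/
noncomputable def transform {T : Type*} [MeasurableSpace T] (κ : Kernel T T) (μ : Measure T) :
    Measure T :=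
  μ.bind (fun s => κ s)

/-- `T2` (with kernel `κ2`) is an `α`-abstraction of `T1` (with kernel `κ1`): for every initial
probability distribution `μ` on `S1`, `α_#(Ω_{T1}(μ))` and `Ω_{T2}(α_#(μ))` are qualitatively
equivalent. -/
def IsAbstraction {S1 S2 : Type*} [MeasurableSpace S1] [MeasurableSpace S2]
    (κ1 : Kernel S1 S1) (κ2 : Kernel S2 S2) (α : S1 → S2) : Prop :=
  ∀ μ : Measure S1, IsProbabilityMeasure μ →
    QualEquiv ((transform κ1 μ).map α) (transform κ2 (μ.map α))

/-! By the Markov property a run avoids `A` almost surely iff every marginal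
`Ω_T^k(μ)` (the law of the `k`-th state) gives `A` measure zero. The abstraction property yields
`α_#(Ω_{T1}(ρ)) ≪ Ω_{T2}(α_#(ρ))`, and `Ω_{T2}` preserves absolute continuity, so by induction
`α_#(Ω_{T1}^k(μ)) ≪ Ω_{T2}^k(α_#(μ))` for every `k`: a marginal null set of `T2` pulls back to a
marginal null set of `T1`. -/

lemma measurable_snoc_s11 {n : ℕ} :
    Measurable (fun p : (Fin n → S) × S => (Fin.snoc p.1 p.2 : Fin (n + 1) → S)) := by
  refine measurable_pi_lambda _ fun i => ?_
  induction i using Fin.lastCases with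
  | last => simpa only [Fin.snoc_last] using measurable_snd
  | cast j =>
    simp only [Fin.snoc_castSucc]
    exact (measurable_pi_apply j).comp measurable_fst

lemma measurable_snoc_left {n : ℕ} (x : Fin n → S) :
    Measurable (Fin.snoc (α := fun _ => S) x) :=
  measurable_snoc_s11.comp measurable_prodMk_left

section Kernel

variable {κ : Kernel S S}

lemma measurable_finDist_step [IsSFiniteKernel κ] (n : ℕ) :
    Measurable (fun x : Fin (n + 1) → S =>
      (κ (x (Fin.last n))).map (Fin.snoc (α := fun _ => S) x)) := by
  refine Measure.measurable_of_measurable_coe _ fun s hs => ?_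
  -- the mass of `s` is that of a section of the measurable set `snoc ⁻¹' s` under an s-finite kernel
  have hsection : ∀ x : Fin (n + 1) → S,
      (κ (x (Fin.last n))).map (Fin.snoc (α := fun _ => S) x) s =
      κ.comap (fun y : Fin (n + 1) → S => y (Fin.last n)) (measurable_pi_apply _) x
        (Prod.mk x ⁻¹' ((fun p : (Fin (n + 1) → S) × S => Fin.snoc p.1 p.2) ⁻¹' s)) := fun x =>
    Measure.map_apply (measurable_snoc_left x) hs
  simp_rw [hsection]
  exact Kernel.measurable_kernel_prodMk_left (measurable_snoc_s11 hs)

lemma finDist_map_last [IsSFiniteKernel κ] (μ : Measure S) (n : ℕ) :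
    (finDist κ μ n).map (fun x => x (Fin.last n)) = (transform κ)^[n] μ := by
  induction n with
  | zero =>
    have hconst : Measurable (fun (s : S) (_ : Fin 1) => s) :=
      measurable_pi_lambda _ fun _ => measurable_id
    rw [finDist, Measure.map_map (measurable_pi_apply _) hconst]
    exact Measure.map_id
  | succ n ih =>
    ext A hA
    have hlast : ∀ x : Fin (n + 1) → S, (κ (x (Fin.last n))).map (Fin.snoc (α := fun _ => S) x)
        ((fun y : Fin (n + 2) → S => y (Fin.last (n + 1))) ⁻¹' A) = κ (x (Fin.last n)) A := by
      intro x
      rw [Measure.map_apply (measurable_snoc_left x) (hA.preimage (measurable_pi_apply _))]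
      simp only [preimage_preimage, Fin.snoc_last, preimage_id']
    rw [Function.iterate_succ_apply', Measure.map_apply (measurable_pi_apply _) hA, finDist,
      Measure.bind_apply (hA.preimage (measurable_pi_apply _))
        (measurable_finDist_step n).aemeasurable, transform,
      Measure.bind_apply hA κ.measurable.aemeasurable, ← ih,
      lintegral_map (κ.measurable_coe hA) (measurable_pi_apply _)]
    simp_rw [hlast]

lemma isProbabilityMeasure_iterate_transform [IsMarkovKernel κ] (μ : Measure S)
    [IsProbabilityMeasure μ] (k : ℕ) : IsProbabilityMeasure ((transform κ)^[k] μ) := by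
  induction k with
  | zero => assumption
  | succ k ih =>
    rw [Function.iterate_succ_apply']
    exact inferInstanceAs (IsProbabilityMeasure (κ ∘ₘ _))

namespace IsMarkovMeasureFamily

variable {P : Measure S → Measure (ℕ → S)}

lemma map_eval [IsSFiniteKernel κ] (hP : IsMarkovMeasureFamily κ P) (μ : Measure S)
    [IsProbabilityMeasure μ] (k : ℕ) : (P μ).map (fun ω => ω k) = (transform κ)^[k] μ := by
  have hproj : Measurable (fun ω : ℕ → S => fun i : Fin (k + 1) => ω i.1) :=
    measurable_pi_lambda _ fun i => measurable_pi_apply i.1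
  rw [← finDist_map_last, ← (hP μ ‹_›).2 k, Measure.map_map (measurable_pi_apply _) hproj]
  rfl

lemma measure_FEv_eq_zero_iff [IsSFiniteKernel κ] (hP : IsMarkovMeasureFamily κ P)
    (μ : Measure S) [IsProbabilityMeasure μ] {A : Set S} (hA : MeasurableSet A) :
    P μ (FEv A) = 0 ↔ ∀ k, (transform κ)^[k] μ A = 0 := by
  have hFEv : FEv A = ⋃ k, (fun ω : ℕ → S => ω k) ⁻¹' A := by
    ext ω
    simp [FEv]
  rw [hFEv, measure_iUnion_null_iff]
  refine forall_congr' fun k => ?_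
  rw [← hP.map_eval μ k, Measure.map_apply (measurable_pi_apply k) hA]

end IsMarkovMeasureFamily

end Kernel

namespace IsAbstraction

variable {S1 S2 : Type*} [MeasurableSpace S1] [MeasurableSpace S2]
  {κ1 : Kernel S1 S1} {κ2 : Kernel S2 S2} {α : S1 → S2}

lemma map_transform_absolutelyContinuous (habs : IsAbstraction κ1 κ2 α) (μ : Measure S1)
    [IsProbabilityMeasure μ] : (transform κ1 μ).map α ≪ transform κ2 (μ.map α) :=
  .mk fun C hC hnull =>
    nonpos_iff_eq_zero.mp (not_lt.mp fun hpos => ((habs μ ‹_› C hC).mp hpos).ne' hnull)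

lemma map_iterate_transform_absolutelyContinuous [IsMarkovKernel κ1]
    (habs : IsAbstraction κ1 κ2 α) (μ : Measure S1) [IsProbabilityMeasure μ] (k : ℕ) :
    ((transform κ1)^[k] μ).map α ≪ (transform κ2)^[k] (μ.map α) := by
  induction k with
  | zero => exact .rfl
  | succ k ih =>
    have := isProbabilityMeasure_iterate_transform (κ := κ1) μ k
    rw [Function.iterate_succ_apply', Function.iterate_succ_apply']
    exact (habs.map_transform_absolutelyContinuous _).trans (ih.comp_right κ2)

end IsAbstraction

/-- An `α`-abstraction preserves positive probability of reachability:
if `Prob^{T1}_μ(F α⁻¹(B)) > 0` then `Prob^{T2}_{α_#(μ)}(F B) > 0`. -/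
theorem abstraction_preserves_positive_reachability
    {S1 S2 : Type*} [MeasurableSpace S1] [MeasurableSpace S2]
    (κ1 : Kernel S1 S1) [IsMarkovKernel κ1] (κ2 : Kernel S2 S2) [IsMarkovKernel κ2]
    (P1 : Measure S1 → Measure (ℕ → S1)) (hP1 : IsMarkovMeasureFamily κ1 P1)
    (P2 : Measure S2 → Measure (ℕ → S2)) (hP2 : IsMarkovMeasureFamily κ2 P2)
    (α : S1 → S2) (hα : Measurable α)
    (habs : IsAbstraction κ1 κ2 α) :
    ∀ B : Set S2, MeasurableSet B → ∀ μ : Measure S1, IsProbabilityMeasure μ →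
      0 < P1 μ (FEv (α ⁻¹' B)) → 0 < P2 (μ.map α) (FEv B) := by
  intro B hB μ hμ hreach
  have : IsProbabilityMeasure (μ.map α) := Measure.isProbabilityMeasure_map hα.aemeasurable
  refine pos_iff_ne_zero.mpr fun hnull => hreach.ne' ?_
  rw [hP1.measure_FEv_eq_zero_iff μ (hB.preimage hα)]
  intro k
  rw [← Measure.map_apply hα hB]
  exact habs.map_iterate_transform_absolutelyContinuous μ k
    ((hP2.measure_FEv_eq_zero_iff _ hB).mp hnull k)

end STS
end
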